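/- If α is a continuous gauge norm on L^∞(X,μ) (where μ is a nonatomic probability measure) that is rotation-symmetric on the circle, i.e. α(f_θ) = α(f) for all θ where f_θ(z) = f(e^{iθ}z), then α is dominating: ‖f‖₁ ≤ α(f) for all f ∈ L^∞(𝕋, m). -/

import Mathlib

/- STATEMENT 0: If α is a continuous gauge norm on L^∞(𝕋, m) (m normalized Lebesgue/Haar
measure on the circle, a nonatomic probability measure) which is rotation-symmetric,
then α is dominating: ‖f‖₁ ≤ α(f) for all f ∈ L^∞(𝕋, m). -/

open MeasureTheory

noncomputable section

instance : Fact (0 < 2 * Real.pi) := ⟨by positivity⟩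

/-- The circle, modeled as `ℝ / 2πℤ`. -/
abbrev Circle𝕋 := AddCircle (2 * Real.pi)

/-- Normalized Lebesgue (Haar) measure on the circle: a probability measure. -/
abbrev circleHaar : Measure Circle𝕋 := AddCircle.haarAddCircle

/-- `α` is a gauge norm on `L^∞(X, μ)`: a norm on (a.e. classes of) essentially bounded
functions with `α 1 = 1` and `α |f| = α f`. -/
structure IsGaugeNorm {X : Type*} [MeasurableSpace X] (μ : Measure X)
    (α : (X → ℂ) → ℝ) : Prop where
  congr_ae : ∀ f g : X → ℂ, f =ᵐ[μ] g → α f = α g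
  nonneg : ∀ f : X → ℂ, 0 ≤ α f
  eq_zero : ∀ f : X → ℂ, MemLp f ⊤ μ → α f = 0 → f =ᵐ[μ] 0
  add_le : ∀ f g : X → ℂ, MemLp f ⊤ μ → MemLp g ⊤ μ → α (f + g) ≤ α f + α g
  smul_eq : ∀ (c : ℂ) (f : X → ℂ), α (c • f) = ‖c‖ * α f
  norm_one : α 1 = 1
  gauge : ∀ f : X → ℂ, α (fun x => (‖f x‖ : ℂ)) = α f

/-- `α` is continuous: `α(χ_E) → 0` as `μ E → 0`. -/
def IsContinuousGauge {X : Type*} [MeasurableSpace X] (μ : Measure X)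
    (α : (X → ℂ) → ℝ) : Prop :=
  ∀ ε : ℝ, 0 < ε → ∃ δ : ℝ, 0 < δ ∧ ∀ E : Set X, MeasurableSet E →
    μ E < ENNReal.ofReal δ → α (Set.indicator E (fun _ => (1 : ℂ))) < ε

/-!
Averaging `g` with a rotate `g (θ + ·)` keeps its mean and does not increase `α`, by
subadditivity and rotation invariance. For a suitable `θ` it also halves the variance: for the
centred function `u`, the mean over `θ` of the correlation `∫ u x * u (θ + x) dx` is
`(∫ u)² = 0`, so some correlation is `≤ 0`. Iterating from `|f|` yields bounded `g` with
`α g ≤ α f`, mean `‖f‖₁` and arbitrarily small variance. By Chebyshev, `|g - ‖f‖₁|` is small off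
a set of small measure, whose indicator has small `α` by continuity, so
`‖f‖₁ = α ‖f‖₁ ≤ α g + α (‖f‖₁ - g) ≤ α f + ε`.
-/

open Complex

theorem memLp_top_of_abs_le {X : Type*} [MeasurableSpace X] {μ : Measure X} {u : X → ℝ}
    (hu : Measurable u) {M : ℝ} (huM : ∀ x, |u x| ≤ M) : MemLp u ⊤ μ :=
  memLp_top_of_bound hu.aestronglyMeasurable M (.of_forall huM)

theorem integrable_sq_of_abs_le {X : Type*} [MeasurableSpace X] {μ : Measure X}
    [IsFiniteMeasure μ] {u : X → ℝ} (hu : Measurable u) {M : ℝ} (huM : ∀ x, |u x| ≤ M) :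
    Integrable (fun x => u x ^ 2) μ :=
  (memLp_top_of_abs_le (hu.pow_const 2) (M := M ^ 2) fun x => by
    rw [abs_pow]; exact pow_le_pow_left₀ (abs_nonneg _) (huM x) 2).integrable le_top

namespace IsGaugeNorm

variable {X : Type*} [MeasurableSpace X] {μ : Measure X} {α : (X → ℂ) → ℝ}

theorem congr_norm (hα : IsGaugeNorm μ α) {f g : X → ℂ} (hfg : ∀ᵐ x ∂μ, ‖f x‖ = ‖g x‖) :
    α f = α g := by
  rw [← hα.gauge f, ← hα.gauge g]
  exact hα.congr_ae _ _ (hfg.mono fun x hx => by simp only [hx])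

theorem apply_const (hα : IsGaugeNorm μ α) (c : ℂ) : α (fun _ => c) = ‖c‖ := by
  rw [show (fun _ : X => c) = c • (1 : X → ℂ) by ext; simp, hα.smul_eq, hα.norm_one, mul_one]

theorem mono (hα : IsGaugeNorm μ α) {f g : X → ℂ} (hf : AEStronglyMeasurable f μ)
    (hg : MemLp g ⊤ μ) (hfg : ∀ᵐ x ∂μ, ‖f x‖ ≤ ‖g x‖) : α f ≤ α g := by
  -- `|f|` is the mean of `|f| ± i √(|g|² - |f|²)`, both of modulus `|g|`.
  let F (s : ℝ) (x : X) : ℂ := ‖f x‖ + (s * √(‖g x‖ ^ 2 - ‖f x‖ ^ 2) : ℝ) * I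
  have hF_norm (s : ℝ) (hs : s ^ 2 = 1) : ∀ᵐ x ∂μ, ‖F s x‖ = ‖g x‖ := by
    filter_upwards [hfg] with x hx
    have : ‖f x‖ ^ 2 ≤ ‖g x‖ ^ 2 := pow_le_pow_left₀ (norm_nonneg _) hx 2
    rw [norm_add_mul_I, mul_pow, hs, one_mul, Real.sq_sqrt (sub_nonneg.2 this),
      add_sub_cancel, Real.sqrt_sq (norm_nonneg _)]
  have hF_memLp (s : ℝ) (hs : s ^ 2 = 1) : MemLp (F s) ⊤ μ := by
    have := hf.aemeasurable
    have := hg.1.aemeasurable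
    exact hg.of_le (by fun_prop : AEMeasurable (F s) μ).aestronglyMeasurable
      ((hF_norm s hs).mono fun x hx => hx.le)
  have hsplit : (fun x => (‖f x‖ : ℂ)) = (1 / 2 : ℂ) • F 1 + (1 / 2 : ℂ) • F (-1) := by
    ext x
    simp only [F, Pi.add_apply, Pi.smul_apply, smul_eq_mul]
    push_cast
    ring
  calc α f = α ((1 / 2 : ℂ) • F 1 + (1 / 2 : ℂ) • F (-1)) := by rw [← hsplit, hα.gauge]
    _ ≤ ‖(1 / 2 : ℂ)‖ * α (F 1) + ‖(1 / 2 : ℂ)‖ * α (F (-1)) := by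
      rw [← hα.smul_eq, ← hα.smul_eq]
      exact hα.add_le _ _ ((hF_memLp 1 (by norm_num)).const_smul _)
        ((hF_memLp (-1) (by norm_num)).const_smul _)
    _ = α g := by
      rw [hα.congr_norm (hF_norm 1 (by norm_num)), hα.congr_norm (hF_norm (-1) (by norm_num))]
      norm_num
      ring

end IsGaugeNorm

theorem MeasureTheory.MemLp.exists_measurable_abs_le_ae_eq_norm {X : Type*} [MeasurableSpace X]
    {μ : Measure X} {f : X → ℂ} (hf : MemLp f ⊤ μ) :
    ∃ g : X → ℝ, Measurable g ∧ (∃ M, ∀ x, |g x| ≤ M) ∧ g =ᵐ[μ] fun x => ‖f x‖ := by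
  set M := (eLpNorm f ⊤ μ).toReal
  have hfM : ∀ᵐ x ∂μ, ‖f x‖ ≤ M := by
    filter_upwards [ae_le_eLpNormEssSup (f := f) (μ := μ)] with x hx
    rw [← eLpNorm_exponent_top] at hx
    exact (ENNReal.toReal_mono hf.2.ne hx).trans_eq' (by simp)
  refine ⟨fun x => min ‖hf.1.mk f x‖ M, hf.1.stronglyMeasurable_mk.measurable.norm.min
    measurable_const, ⟨M, fun x => ?_⟩, ?_⟩
  · rw [abs_of_nonneg (le_min (norm_nonneg _) ENNReal.toReal_nonneg)]
    exact min_le_right _ _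
  · filter_upwards [hfM, hf.1.ae_eq_mk] with x hxM hx
    rw [← hx, min_eq_left hxM]

theorem IsContinuousGauge.exists_pos_gauge_le_of_integral_sq_lt {X : Type*} [MeasurableSpace X]
    {μ : Measure X} [IsFiniteMeasure μ] {α : (X → ℂ) → ℝ} (hcont : IsContinuousGauge μ α)
    (hα : IsGaugeNorm μ α) (K : ℝ) {ε : ℝ} (hε : 0 < ε) :
    ∃ η > 0, ∀ u : X → ℝ, Measurable u → (∀ x, |u x| ≤ K) → ∫ x, u x ^ 2 ∂μ < η →
      α (fun x => (u x : ℂ)) ≤ ε := by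
  set K' := |K| + 1
  have hK' : 0 < K' := by positivity
  obtain ⟨δ, hδ, hχ⟩ := hcont (ε / (2 * K')) (by positivity)
  refine ⟨(ε / 2) ^ 2 * δ, by positivity, fun u hu huK hu2 => ?_⟩
  -- Off the set `E`, `|u| < ε / 2`; by Chebyshev `E` is small, so `α χ_E` is small.
  set E := {x | (ε / 2) ^ 2 ≤ u x ^ 2}
  have hEm : MeasurableSet E := measurableSet_le measurable_const (hu.pow_const 2)
  have hμE : μ E < ENNReal.ofReal δ := by
    have hcheb := mul_meas_ge_le_integral_of_nonneg (.of_forall fun x => sq_nonneg (u x))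
      (integrable_sq_of_abs_le (μ := μ) hu huK) ((ε / 2) ^ 2)
    rw [ENNReal.lt_ofReal_iff_toReal_lt (measure_ne_top _ _), ← measureReal_def]
    exact lt_of_mul_lt_mul_left (hcheb.trans_lt hu2) (by positivity)
  set w : X → ℂ := (fun _ => ((ε / 2 : ℝ) : ℂ)) + (K' : ℂ) • E.indicator (fun _ => 1)
  have huw : ∀ x, ‖(u x : ℂ)‖ ≤ ‖w x‖ := by
    intro x
    by_cases hx : x ∈ E
    · have : w x = ((ε / 2 + K' : ℝ) : ℂ) := by simp [w, hx]
      rw [this, norm_real, norm_real, Real.norm_eq_abs, Real.norm_of_nonneg (by positivity)]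
      linarith [huK x, le_abs_self K]
    · have hux : u x ^ 2 < (ε / 2) ^ 2 := not_le.1 hx
      have : w x = ((ε / 2 : ℝ) : ℂ) := by simp [w, hx]
      rw [this, norm_real, norm_real, Real.norm_eq_abs, Real.norm_of_nonneg (by positivity)]
      exact (abs_lt_of_sq_lt_sq hux (by positivity)).le
  have hχ_memLp : MemLp (E.indicator fun _ => (1 : ℂ)) ⊤ μ :=
    memLp_indicator_const ⊤ hEm 1 (.inr (measure_ne_top _ _))
  have hw_memLp : MemLp w ⊤ μ :=
    (memLp_const ((ε / 2 : ℝ) : ℂ)).add (hχ_memLp.const_smul (K' : ℂ))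
  calc α (fun x => (u x : ℂ))
      ≤ α w := hα.mono (by fun_prop) hw_memLp (.of_forall huw)
    _ ≤ ε / 2 + K' * α (E.indicator fun _ => 1) := by
      refine (hα.add_le _ _ (memLp_const _) (hχ_memLp.const_smul _)).trans_eq ?_
      rw [hα.apply_const, hα.smul_eq, norm_real, norm_real, Real.norm_of_nonneg (by positivity),
        Real.norm_of_nonneg (by positivity)]
    _ ≤ ε / 2 + K' * (ε / (2 * K')) := by gcongr; exact (hχ E hEm hμE).le
    _ = ε := by field_simp; ring

def rotateAverage {G : Type*} [Add G] (θ : G) (g : G → ℝ) : G → ℝ :=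
  fun x => (g x + g (θ + x)) / 2

theorem abs_rotateAverage_le {G : Type*} [Add G] {g : G → ℝ} {M : ℝ} (hgM : ∀ x, |g x| ≤ M)
    (θ x : G) : |rotateAverage θ g x| ≤ M := by
  rw [rotateAverage, abs_div, abs_two, div_le_iff₀ two_pos]
  linarith [abs_add_le (g x) (g (θ + x)), hgM x, hgM (θ + x)]

theorem Measurable.rotateAverage {G : Type*} [Add G] [MeasurableSpace G] [MeasurableAdd G]
    {g : G → ℝ} (hg : Measurable g) (θ : G) : Measurable (rotateAverage θ g) :=
  (hg.add (hg.comp (measurable_const_add θ))).div_const 2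

section Rotation

variable {G : Type*} [AddCommGroup G] [MeasurableSpace G] [MeasurableAdd G] {μ : Measure G}

theorem integral_rotateAverage [μ.IsAddLeftInvariant] {g : G → ℝ} (hg : Integrable g μ) (θ : G) :
    ∫ x, rotateAverage θ g x ∂μ = ∫ x, g x ∂μ := by
  simp only [rotateAverage]
  rw [integral_div, integral_add hg (hg.comp_add_left θ), integral_add_left_eq_self g θ]
  ring

theorem integral_sq_rotateAverage [IsFiniteMeasure μ] [μ.IsAddLeftInvariant]
    {u : G → ℝ} (hu : Measurable u) {M : ℝ} (huM : ∀ x, |u x| ≤ M) (θ : G) :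
    ∫ x, rotateAverage θ u x ^ 2 ∂μ =
      (∫ x, u x ^ 2 ∂μ) / 2 + (∫ x, u x * u (θ + x) ∂μ) / 2 := by
  have hu2 : Integrable (fun x => u x ^ 2) μ := integrable_sq_of_abs_le hu huM
  have hu2θ : Integrable (fun x => u (θ + x) ^ 2) μ := hu2.comp_add_left θ
  have huu : Integrable (fun x => u x * u (θ + x)) μ :=
    (memLp_top_of_abs_le (u := fun x => u x * u (θ + x))
      (hu.mul (hu.comp (measurable_const_add θ))) (M := M * M) fun x => by
        rw [abs_mul]
        exact mul_le_mul (huM x) (huM _) (abs_nonneg _) ((abs_nonneg _).trans (huM x))).integrable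
        le_top
  have hexpand : (fun x => rotateAverage θ u x ^ 2) =
      fun x => (u x ^ 2 / 4 + u (θ + x) ^ 2 / 4) + u x * u (θ + x) / 2 := by
    ext x
    simp only [rotateAverage]
    ring
  rw [hexpand, integral_add (f := fun x => u x ^ 2 / 4 + u (θ + x) ^ 2 / 4)
    ((hu2.div_const 4).add (hu2θ.div_const 4)) (huu.div_const 2),
    integral_add (hu2.div_const 4) (hu2θ.div_const 4), integral_div, integral_div, integral_div,
    integral_add_left_eq_self (fun x => u x ^ 2) θ]
  ring

end Rotation

section Correlation

variable {G : Type*} [AddCommGroup G] [MeasurableSpace G] [MeasurableAdd₂ G] {μ : Measure G}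
  {u : G → ℝ} {M : ℝ}

theorem integrable_uncurry_mul_add [IsFiniteMeasure μ] (hu : Measurable u)
    (huM : ∀ x, |u x| ≤ M) :
    Integrable (Function.uncurry fun θ x => u x * u (θ + x)) (μ.prod μ) :=
  (memLp_top_of_abs_le (u := Function.uncurry fun θ x => u x * u (θ + x))
    ((hu.comp measurable_snd).mul (hu.comp (measurable_fst.add measurable_snd)))
    (M := M * M) fun p => by
      rw [Function.uncurry_apply_pair, abs_mul]
      exact mul_le_mul (huM _) (huM _) (abs_nonneg _) ((abs_nonneg _).trans (huM p.2))).integrable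
    le_top

theorem integral_integral_mul_add_eq_zero [IsFiniteMeasure μ] [μ.IsAddLeftInvariant]
    (hu : Measurable u) (huM : ∀ x, |u x| ≤ M) (hu0 : ∫ x, u x ∂μ = 0) :
    ∫ θ, ∫ x, u x * u (θ + x) ∂μ ∂μ = 0 := by
  rw [integral_integral_swap (integrable_uncurry_mul_add hu huM)]
  simp_rw [integral_const_mul, add_comm _ (_ : G), integral_add_left_eq_self u, hu0, mul_zero,
    integral_zero]

theorem exists_integral_sq_rotateAverage_le [IsProbabilityMeasure μ] [μ.IsAddLeftInvariant]
    (hu : Measurable u) (huM : ∀ x, |u x| ≤ M) (hu0 : ∫ x, u x ∂μ = 0) :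
    ∃ θ, ∫ x, rotateAverage θ u x ^ 2 ∂μ ≤ (∫ x, u x ^ 2 ∂μ) / 2 := by
  obtain ⟨θ, hθ⟩ :=
    exists_le_integral (integrable_uncurry_mul_add (μ := μ) hu huM).integral_prod_left
  simp only [Function.uncurry_apply_pair, integral_integral_mul_add_eq_zero hu huM hu0] at hθ
  exact ⟨θ, by rw [integral_sq_rotateAverage hu huM θ]; linarith⟩

end Correlation

namespace IsGaugeNorm

variable {G : Type*} [AddCommGroup G] [MeasurableSpace G] {μ : Measure G}
  {α : (G → ℂ) → ℝ}

theorem gauge_rotateAverage_le [MeasurableAdd G] (hα : IsGaugeNorm μ α)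
    (hrot : ∀ (θ : G) (f : G → ℂ), α (fun x => f (θ + x)) = α f) {g : G → ℝ}
    (hg : Measurable g) {M : ℝ} (hgM : ∀ x, |g x| ≤ M) (θ : G) :
    α (fun x => (rotateAverage θ g x : ℂ)) ≤ α (fun x => (g x : ℂ)) := by
  have hsplit : (fun x => (rotateAverage θ g x : ℂ)) =
      (1 / 2 : ℂ) • ((fun x => (g x : ℂ)) + fun x => (g (θ + x) : ℂ)) := by
    ext x
    simp only [rotateAverage, Pi.smul_apply, Pi.add_apply, smul_eq_mul]
    push_cast
    ring
  have hadd := hα.add_le (fun x => (g x : ℂ)) (fun x => (g (θ + x) : ℂ))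
    (memLp_top_of_abs_le (μ := μ) hg hgM).ofReal
    (memLp_top_of_abs_le (μ := μ) (u := fun x => g (θ + x)) (hg.comp (measurable_const_add θ))
      fun x => hgM _).ofReal
  have hgθ : α (fun x => (g (θ + x) : ℂ)) = α (fun x => (g x : ℂ)) := hrot θ fun x => (g x : ℂ)
  rw [hgθ] at hadd
  rw [hsplit, hα.smul_eq]
  norm_num
  linarith

variable [MeasurableAdd₂ G] [IsProbabilityMeasure μ] [μ.IsAddLeftInvariant]

theorem exists_gauge_le_integral_sq_sub_lt (hα : IsGaugeNorm μ α)
    (hrot : ∀ (θ : G) (f : G → ℂ), α (fun x => f (θ + x)) = α f) {g : G → ℝ}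
    (hg : Measurable g) {M : ℝ} (hgM : ∀ x, |g x| ≤ M) {η : ℝ} (hη : 0 < η) :
    ∃ g' : G → ℝ, Measurable g' ∧ (∀ x, |g' x| ≤ M) ∧ ∫ x, g' x ∂μ = ∫ x, g x ∂μ ∧
      α (fun x => (g' x : ℂ)) ≤ α (fun x => (g x : ℂ)) ∧
      ∫ x, (g' x - ∫ y, g y ∂μ) ^ 2 ∂μ < η := by
  set c := ∫ y, g y ∂μ
  set V := ∫ x, (g x - c) ^ 2 ∂μ
  have hhalve (n : ℕ) : ∃ g' : G → ℝ, Measurable g' ∧ (∀ x, |g' x| ≤ M) ∧ ∫ x, g' x ∂μ = c ∧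
      α (fun x => (g' x : ℂ)) ≤ α (fun x => (g x : ℂ)) ∧
      ∫ x, (g' x - c) ^ 2 ∂μ ≤ V * (1 / 2) ^ n := by
    induction n with
    | zero => exact ⟨g, hg, hgM, rfl, le_rfl, by rw [pow_zero, mul_one]⟩
    | succ n ih =>
      obtain ⟨g', hg', hg'M, hg'c, hαg', hg'V⟩ := ih
      have hg'_int : Integrable g' μ := (memLp_top_of_abs_le hg' hg'M).integrable le_top
      obtain ⟨θ, hθ⟩ := exists_integral_sq_rotateAverage_le (μ := μ) (hg'.sub_const c)
        (M := M + |c|) (fun x => (abs_sub _ _).trans (by linarith [hg'M x]))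
        (by simp [integral_sub hg'_int (integrable_const c), hg'c])
      refine ⟨rotateAverage θ g', hg'.rotateAverage θ, abs_rotateAverage_le hg'M θ,
        (integral_rotateAverage hg'_int θ).trans hg'c,
        (hα.gauge_rotateAverage_le hrot hg' hg'M θ).trans hαg', ?_⟩
      have hcentre : ∀ x, rotateAverage θ g' x - c = rotateAverage θ (fun y => g' y - c) x := by
        intro x
        simp only [rotateAverage]
        ring
      simp_rw [hcentre]
      linarith [show V * (1 / 2) ^ (n + 1) = V * (1 / 2) ^ n / 2 by ring]
  obtain ⟨n, hn⟩ : ∃ n : ℕ, V * (1 / 2) ^ n < η := by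
    have := (tendsto_pow_atTop_nhds_zero_of_lt_one (r := (1 / 2 : ℝ)) (by norm_num)
      (by norm_num)).const_mul V
    rw [mul_zero] at this
    exact (this.eventually (gt_mem_nhds hη)).exists
  obtain ⟨g', hg', hg'M, hg'c, hαg', hg'V⟩ := hhalve n
  exact ⟨g', hg', hg'M, hg'c, hαg', hg'V.trans_lt hn⟩

theorem integral_norm_le_of_rotation_invariant (hα : IsGaugeNorm μ α)
    (hcont : IsContinuousGauge μ α)
    (hrot : ∀ (θ : G) (f : G → ℂ), α (fun x => f (θ + x)) = α f) {f : G → ℂ}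
    (hf : MemLp f ⊤ μ) : ∫ x, ‖f x‖ ∂μ ≤ α f := by
  obtain ⟨g₀, hg₀, ⟨M, hg₀M⟩, hg₀f⟩ := hf.exists_measurable_abs_le_ae_eq_norm
  have hαg₀ : α (fun x => (g₀ x : ℂ)) = α f :=
    hα.congr_norm (hg₀f.mono fun x hx => by simp [hx])
  set c := ∫ x, g₀ x ∂μ
  have hc : ∫ x, ‖f x‖ ∂μ = c := integral_congr_ae hg₀f.symm
  have hc0 : 0 ≤ c := hc ▸ integral_nonneg fun _ => norm_nonneg _
  rw [hc]
  refine le_of_forall_pos_le_add fun ε hε => ?_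
  obtain ⟨η, hη, hsmall⟩ := hcont.exists_pos_gauge_le_of_integral_sq_lt hα (M + |c|) hε
  obtain ⟨g, hg, hgM, -, hαg, hgη⟩ := exists_gauge_le_integral_sq_sub_lt hα hrot hg₀ hg₀M hη
  have hcg_bound : ∀ x, |c - g x| ≤ M + |c| :=
    fun x => (abs_sub c (g x)).trans (by linarith [hgM x])
  have hαcg : α (fun x => ((c - g x : ℝ) : ℂ)) ≤ ε :=
    hsmall _ (measurable_const.sub hg) hcg_bound (by simpa only [sub_sq_comm c] using hgη)
  have hdecomp : (fun _ => (c : ℂ)) = (fun x => (g x : ℂ)) + fun x => ((c - g x : ℝ) : ℂ) := by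
    ext x
    simp only [Pi.add_apply]
    push_cast
    ring
  calc c = α (fun _ => (c : ℂ)) := by rw [hα.apply_const, norm_real, Real.norm_of_nonneg hc0]
    _ ≤ α (fun x => (g x : ℂ)) + α (fun x => ((c - g x : ℝ) : ℂ)) := by
      rw [hdecomp]
      exact hα.add_le _ _ (memLp_top_of_abs_le hg hgM).ofReal
        (memLp_top_of_abs_le (measurable_const.sub hg) hcg_bound).ofReal
    _ ≤ α f + ε := by linarith

end IsGaugeNorm

/-- Rotation symmetry theorem: a continuous gauge norm on `L^∞` of the circle which is
invariant under rotations is dominating: `‖f‖₁ ≤ α f` for every `f ∈ L^∞(𝕋, m)`. -/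
theorem gauge_norm_rotation_invariant_dominating
    (α : (Circle𝕋 → ℂ) → ℝ)
    (hgauge : IsGaugeNorm circleHaar α)
    (hcont : IsContinuousGauge circleHaar α)
    (hrot : ∀ (θ : Circle𝕋) (f : Circle𝕋 → ℂ), α (fun x => f (θ + x)) = α f) :
    ∀ f : Circle𝕋 → ℂ, MemLp f ⊤ circleHaar →
      ∫ x, ‖f x‖ ∂circleHaar ≤ α f :=
  fun _ hf => hgauge.integral_norm_le_of_rotation_invariant hcont hrot hf
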